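/- Let 1 ≤ m < n and identify ℝⁿ = ℝᵐ × ℝ^{n−m} with the product inner product. For a linear map A : ℝᵐ → ℝ^{n−m}, let G(A) := {(x, Ax) : x ∈ ℝᵐ}, let P(A) : ℝⁿ → ℝⁿ be the orthogonal projection onto the subspace G(A), and let L(A) : ℝⁿ → ℝⁿ be the linear map L(A)(x,y) := (x + A*y, Ax), where A* denotes the adjoint of A. Then the map F(A) := P(A) − L(A) satisfies F(0) = 0, and there exists a constant C = C(n,m) > 0 such that for all linear maps A₁, A₂ : ℝᵐ → ℝ^{n−m} with operator norms ‖A₁‖ ≤ 1 and ‖A₂‖ ≤ 1, one has ‖F(A₁) − F(A₂)‖ ≤ C·(‖A₁‖ + ‖A₂‖)·‖A₁ − A₂‖ (operator norms). In particular ‖F(A)‖ ≤ C·‖A‖² for ‖A‖ ≤ 1. -/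

import Mathlib

noncomputable section

/-- `ℝᵐ` with the Euclidean structure. -/
abbrev Em (m : ℕ) : Type := EuclideanSpace ℝ (Fin m)

/-- The graph `G(A) = {(x, Ax) : x ∈ ℝᵐ}` of `A : ℝᵐ → ℝᵏ`, as a subspace of
`ℝⁿ = ℝᵐ ×₂ ℝᵏ` (the product carrying the product inner product, i.e. the `ℓ²` product). -/
def graphPlane (m k : ℕ) (A : Em m →L[ℝ] Em k) : Submodule ℝ (WithLp 2 (Em m × Em k)) :=
  (LinearMap.graph (A : Em m →ₗ[ℝ] Em k)).map
    ((WithLp.linearEquiv 2 ℝ (Em m × Em k)).symm.toLinearMap)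

/-- `P(A)` : the orthogonal projection of `ℝⁿ = ℝᵐ ×₂ ℝᵏ` onto the graph plane `G(A)`. -/
def projGraph (m k : ℕ) (A : Em m →L[ℝ] Em k) :
    WithLp 2 (Em m × Em k) →L[ℝ] WithLp 2 (Em m × Em k) :=
  (graphPlane m k A).subtypeL.comp ((graphPlane m k A).orthogonalProjectionOnto)

/-- `L(A)(x, y) := (x + A*y, Ax)`, where `A*` is the adjoint of `A`. -/
def lMap (m k : ℕ) (A : Em m →L[ℝ] Em k) :
    WithLp 2 (Em m × Em k) →L[ℝ] WithLp 2 (Em m × Em k) :=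
  (((WithLp.prodContinuousLinearEquiv 2 ℝ (Em m) (Em k)).symm :
      (Em m × Em k) →L[ℝ] WithLp 2 (Em m × Em k))).comp
    (((((ContinuousLinearMap.fst ℝ (Em m) (Em k)) +
          (ContinuousLinearMap.adjoint A).comp (ContinuousLinearMap.snd ℝ (Em m) (Em k)))).prod
        (A.comp (ContinuousLinearMap.fst ℝ (Em m) (Em k)))).comp
      (((WithLp.prodContinuousLinearEquiv 2 ℝ (Em m) (Em k)) :
        WithLp 2 (Em m × Em k) →L[ℝ] (Em m × Em k))))

/-- `F(A) := P(A) − L(A)`. -/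
def fMap (m k : ℕ) (A : Em m →L[ℝ] Em k) :
    WithLp 2 (Em m × Em k) →L[ℝ] WithLp 2 (Em m × Em k) :=
  projGraph m k A - lMap m k A

namespace Stmt10
open ContinuousLinearMap

variable {m k : ℕ}

/-- The adjoint. -/
def ad (A : Em m →L[ℝ] Em k) : Em k →L[ℝ] Em m := ContinuousLinearMap.adjoint A

lemma ad_sub (A₁ A₂ : Em m →L[ℝ] Em k) : ad (A₁ - A₂) = ad A₁ - ad A₂ := map_sub _ _ _

lemma norm_ad (A : Em m →L[ℝ] Em k) : ‖ad A‖ = ‖A‖ :=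
  (ContinuousLinearMap.adjoint (𝕜 := ℝ) (E := Em m) (F := Em k)).norm_map A

lemma norm_ad_sub (A₁ A₂ : Em m →L[ℝ] Em k) : ‖ad A₁ - ad A₂‖ = ‖A₁ - A₂‖ := by
  rw [← ad_sub, norm_ad]

/-- `T(A) = 1 + A*A`. -/
def T (A : Em m →L[ℝ] Em k) : Em m →L[ℝ] Em m := 1 + (ad A).comp A

lemma T_apply (A : Em m →L[ℝ] Em k) (v : Em m) : T A v = v + ad A (A v) := rfl

lemma inner_T (A : Em m →L[ℝ] Em k) (v : Em m) :
    (inner ℝ (T A v) v : ℝ) = ‖v‖ ^ 2 + ‖A v‖ ^ 2 := by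
  rw [T_apply, inner_add_left, ad, ContinuousLinearMap.adjoint_inner_left,
    real_inner_self_eq_norm_sq, real_inner_self_eq_norm_sq]

lemma sq_norm_le_T (A : Em m →L[ℝ] Em k) (v : Em m) : ‖v‖ ^ 2 ≤ ‖T A v‖ * ‖v‖ := by
  have h1 : ‖v‖ ^ 2 ≤ (inner ℝ (T A v) v : ℝ) := by
    rw [inner_T]; nlinarith [sq_nonneg ‖A v‖]
  exact h1.trans (real_inner_le_norm _ _)

lemma T_isUnit (A : Em m →L[ℝ] Em k) : IsUnit (T A) := by
  have hinj : Function.Injective (T A) := by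
    intro x y hxy
    have h : T A (x - y) = 0 := by rw [map_sub, hxy, sub_self]
    have := sq_norm_le_T A (x - y)
    rw [h, norm_zero, zero_mul] at this
    have : ‖x - y‖ = 0 := by nlinarith [norm_nonneg (x - y)]
    rwa [norm_eq_zero, sub_eq_zero] at this
  have hinj' : Function.Injective (T A).toLinearMap := hinj
  have hsurj : Function.Surjective (T A).toLinearMap :=
    (LinearMap.injective_iff_surjective).mp hinj'
  let e : Em m ≃ₗ[ℝ] Em m := LinearEquiv.ofBijective (T A).toLinearMap ⟨hinj', hsurj⟩
  let eC : Em m ≃L[ℝ] Em m := e.toContinuousLinearEquiv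
  refine ⟨eC.toUnit, ?_⟩
  ext v
  rfl

/-- `B(A) = (1 + A*A)⁻¹`. -/
def B (A : Em m →L[ℝ] Em k) : Em m →L[ℝ] Em m := Ring.inverse (T A)

lemma B_mul (A : Em m →L[ℝ] Em k) : B A * T A = 1 := Ring.inverse_mul_cancel _ (T_isUnit A)
lemma mul_B (A : Em m →L[ℝ] Em k) : T A * B A = 1 := Ring.mul_inverse_cancel _ (T_isUnit A)

lemma T_B (A : Em m →L[ℝ] Em k) (w : Em m) : T A (B A w) = w := by
  have := congrArg (fun f : Em m →L[ℝ] Em m => f w) (mul_B A)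
  simpa using this

lemma norm_B_apply_le (A : Em m →L[ℝ] Em k) (w : Em m) : ‖B A w‖ ≤ ‖w‖ := by
  have h := sq_norm_le_T A (B A w)
  rw [T_B] at h
  rcases eq_or_lt_of_le (norm_nonneg (B A w)) with h0 | h0
  · rw [← h0]; exact norm_nonneg w
  · nlinarith

lemma norm_B_le (A : Em m →L[ℝ] Em k) : ‖B A‖ ≤ 1 :=
  opNorm_le_bound _ zero_le_one (fun w => by simpa using norm_B_apply_le A w)

/-- `S(A)(x, y) = x + A* y`. -/
def S (A : Em m →L[ℝ] Em k) : (Em m × Em k) →L[ℝ] Em m :=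
  fst ℝ (Em m) (Em k) + (ad A).comp (snd ℝ (Em m) (Em k))

def eL (m k : ℕ) : WithLp 2 (Em m × Em k) →L[ℝ] Em m × Em k :=
  (WithLp.prodContinuousLinearEquiv 2 ℝ (Em m) (Em k) : WithLp 2 (Em m × Em k) →L[ℝ] Em m × Em k)

def esL (m k : ℕ) : (Em m × Em k) →L[ℝ] WithLp 2 (Em m × Em k) :=
  ((WithLp.prodContinuousLinearEquiv 2 ℝ (Em m) (Em k)).symm :
    (Em m × Em k) →L[ℝ] WithLp 2 (Em m × Em k))

lemma projGraph_eq (A : Em m →L[ℝ] Em k) :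
    projGraph m k A =
      (esL m k).comp (((((B A).comp (S A)).prod (A.comp ((B A).comp (S A)))).comp (eL m k))) := by
  ext v
  show ((graphPlane m k A).starProjection v : WithLp 2 (Em m × Em k)) = _
  set u : Em m := B A (S A (eL m k v)) with hu
  apply Submodule.eq_starProjection_of_mem_of_inner_eq_zero
  · refine ⟨(u, A u), ?_, rfl⟩
    simp [LinearMap.mem_graph_iff]
  · rintro w ⟨⟨z₁, z₂⟩, hz, rfl⟩
    rw [SetLike.mem_coe, LinearMap.mem_graph_iff] at hz
    simp only at hz
    subst hz
    rw [WithLp.prod_inner_apply]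
    have hW : ((esL m k).comp (((((B A).comp (S A)).prod (A.comp ((B A).comp (S A)))).comp (eL m k)))) v
        = (WithLp.equiv 2 (Em m × Em k)).symm (u, A u) := rfl
    rw [hW]
    change (inner ℝ (v.fst - u) z₁ : ℝ) + inner ℝ (v.snd - A u) (A z₁) = 0
    have h2 : (inner ℝ (v.snd - A u) (A z₁) : ℝ) = inner ℝ (ad A (v.snd - A u)) z₁ :=
      (ContinuousLinearMap.adjoint_inner_left A z₁ _).symm
    rw [h2, ← inner_add_left]
    have hT : u + ad A (A u) = v.fst + ad A v.snd := by
      have h := T_B A (S A (eL m k v))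
      rw [← hu] at h
      calc u + ad A (A u) = T A u := rfl
        _ = S A (eL m k v) := h
        _ = v.fst + ad A v.snd := rfl
    have hvec : v.fst - u + ad A (v.snd - A u) = 0 := by
      rw [map_sub]
      rw [← sub_eq_zero] at hT
      abel_nf
      abel_nf at hT
      linear_combination (norm := abel) -hT
    rw [hvec, inner_zero_left]

/-- `P'(A) = B(A) A* A`. -/
def P (A : Em m →L[ℝ] Em k) : Em m →L[ℝ] Em m := (B A).comp ((ad A).comp A)

lemma B_sub_one (A : Em m →L[ℝ] Em k) : B A - 1 = -(P A) := by
  have h := B_mul A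
  rw [T, mul_add, mul_one] at h
  have h2 : B A * ((ad A).comp A) = P A := rfl
  rw [h2] at h
  rw [← h]; abel

/-- `R(A) = B(A) ∘ S(A) - fst`. -/
def R (A : Em m →L[ℝ] Em k) : (Em m × Em k) →L[ℝ] Em m :=
  (B A).comp (S A) - fst ℝ (Em m) (Em k)

lemma R_eq (A : Em m →L[ℝ] Em k) :
    R A = (-(P A)).comp (fst ℝ (Em m) (Em k)) + ((B A).comp (ad A)).comp (snd ℝ (Em m) (Em k)) := by
  refine ContinuousLinearMap.ext fun x => ?_
  have hb := congrArg (fun f : Em m →L[ℝ] Em m => f x.1) (B_sub_one A)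
  simp only [ContinuousLinearMap.sub_apply, ContinuousLinearMap.one_apply] at hb
  simp only [R, S, ContinuousLinearMap.sub_apply, ContinuousLinearMap.add_apply,
    ContinuousLinearMap.comp_apply, ContinuousLinearMap.coe_fst', ContinuousLinearMap.coe_snd',
    ContinuousLinearMap.neg_apply, map_add]
  simp only [ContinuousLinearMap.neg_apply] at hb
  rw [← hb]
  abel

def g₁ (A : Em m →L[ℝ] Em k) : (Em m × Em k) →L[ℝ] Em m := (-(P A)).comp (S A)
def g₂ (A : Em m →L[ℝ] Em k) : (Em m × Em k) →L[ℝ] Em k := A.comp (R A)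

lemma fMap_eq (A : Em m →L[ℝ] Em k) :
    fMap m k A = (esL m k).comp (((g₁ A).prod (g₂ A)).comp (eL m k)) := by
  rw [fMap, projGraph_eq]
  refine ContinuousLinearMap.ext fun v => ?_
  have hl : lMap m k A v = esL m k (S A (eL m k v), A ((eL m k v).1)) := rfl
  simp only [ContinuousLinearMap.sub_apply, ContinuousLinearMap.comp_apply, hl,
    ContinuousLinearMap.prod_apply, ← map_sub, Prod.mk_sub_mk]
  congr 1
  rw [Prod.mk.injEq]
  refine ⟨?_, ?_⟩
  · show (B A) (S A (eL m k v)) - S A (eL m k v) = g₁ A (eL m k v)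
    have hb := congrArg (fun f : Em m →L[ℝ] Em m => f (S A (eL m k v))) (B_sub_one A)
    simp only [ContinuousLinearMap.sub_apply, ContinuousLinearMap.one_apply] at hb
    rw [hb]; rfl
  · rfl

lemma fMap_zero : fMap m k 0 = 0 := by
  rw [fMap_eq]
  have h1 : g₁ (0 : Em m →L[ℝ] Em k) = 0 := by
    refine ContinuousLinearMap.ext fun x => ?_
    simp [g₁, P, ad, map_zero]
  have h2 : g₂ (0 : Em m →L[ℝ] Em k) = 0 := by
    refine ContinuousLinearMap.ext fun x => ?_
    simp [g₂]
  rw [h1, h2]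
  refine ContinuousLinearMap.ext fun v => ?_
  simp
  exact map_zero (esL m k)

/- ### Norm estimates -/

lemma norm_fst_le' : ‖fst ℝ (Em m) (Em k)‖ ≤ 1 :=
  opNorm_le_bound _ zero_le_one (fun x => by simpa using norm_fst_le x)

lemma norm_snd_le' : ‖snd ℝ (Em m) (Em k)‖ ≤ 1 :=
  opNorm_le_bound _ zero_le_one (fun x => by simpa using norm_snd_le x)

lemma norm_S_le (A : Em m →L[ℝ] Em k) (hA : ‖A‖ ≤ 1) : ‖S A‖ ≤ 2 := by
  refine (norm_add_le _ _).trans ?_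
  have h := (opNorm_comp_le (ad A) (snd ℝ (Em m) (Em k)))
  have h2 : ‖(ad A).comp (snd ℝ (Em m) (Em k))‖ ≤ 1 := by
    refine h.trans ?_
    rw [norm_ad]
    calc ‖A‖ * ‖snd ℝ (Em m) (Em k)‖ ≤ 1 * 1 :=
          mul_le_mul hA norm_snd_le' (norm_nonneg _) zero_le_one
      _ = 1 := one_mul 1
  linarith [norm_fst_le' (m := m) (k := k)]

lemma S_sub (A₁ A₂ : Em m →L[ℝ] Em k) :
    S A₁ - S A₂ = (ad A₁ - ad A₂).comp (snd ℝ (Em m) (Em k)) := by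
  refine ContinuousLinearMap.ext fun x => ?_
  simp only [S, ContinuousLinearMap.sub_apply, ContinuousLinearMap.add_apply,
    ContinuousLinearMap.comp_apply, ContinuousLinearMap.coe_snd']
  abel

lemma norm_S_sub (A₁ A₂ : Em m →L[ℝ] Em k) : ‖S A₁ - S A₂‖ ≤ ‖A₁ - A₂‖ := by
  rw [S_sub]
  refine (opNorm_comp_le _ _).trans ?_
  rw [norm_ad_sub]
  calc ‖A₁ - A₂‖ * ‖snd ℝ (Em m) (Em k)‖ ≤ ‖A₁ - A₂‖ * 1 :=
        mul_le_mul_of_nonneg_left norm_snd_le' (norm_nonneg _)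
    _ = ‖A₁ - A₂‖ := mul_one _

lemma B_sub (A₁ A₂ : Em m →L[ℝ] Em k) :
    B A₁ - B A₂ = B A₁ * ((T A₂ - T A₁) * B A₂) := by
  rw [sub_mul, mul_B, mul_sub, mul_one, ← mul_assoc, B_mul, one_mul]

lemma T_sub (A₁ A₂ : Em m →L[ℝ] Em k) :
    T A₂ - T A₁ = (ad A₂).comp A₂ - (ad A₁).comp A₁ := by
  simp only [T]; abel

lemma norm_X_sub (A₁ A₂ : Em m →L[ℝ] Em k) :
    ‖(ad A₂).comp A₂ - (ad A₁).comp A₁‖ ≤ (‖A₁‖ + ‖A₂‖) * ‖A₁ - A₂‖ := by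
  have hid : (ad A₂).comp A₂ - (ad A₁).comp A₁
      = (ad A₂).comp (A₂ - A₁) + (ad A₂ - ad A₁).comp A₁ := by
    refine ContinuousLinearMap.ext fun x => ?_
    simp only [ContinuousLinearMap.sub_apply, ContinuousLinearMap.add_apply,
      ContinuousLinearMap.comp_apply, map_sub]
    abel
  rw [hid]
  refine (norm_add_le _ _).trans ?_
  have h1 : ‖(ad A₂).comp (A₂ - A₁)‖ ≤ ‖A₂‖ * ‖A₁ - A₂‖ := by
    refine (opNorm_comp_le _ _).trans ?_
    rw [norm_ad, norm_sub_rev]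
  have h2 : ‖(ad A₂ - ad A₁).comp A₁‖ ≤ ‖A₁ - A₂‖ * ‖A₁‖ := by
    refine (opNorm_comp_le _ _).trans ?_
    rw [norm_ad_sub, norm_sub_rev]
  nlinarith [norm_nonneg A₁, norm_nonneg A₂, norm_nonneg (A₁ - A₂)]

lemma norm_B_sub (A₁ A₂ : Em m →L[ℝ] Em k) :
    ‖B A₁ - B A₂‖ ≤ (‖A₁‖ + ‖A₂‖) * ‖A₁ - A₂‖ := by
  rw [B_sub, T_sub]
  have h1 := norm_B_le A₁
  have h2 := norm_B_le A₂
  have h3 := norm_X_sub A₁ A₂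
  calc ‖B A₁ * (((ad A₂).comp A₂ - (ad A₁).comp A₁) * B A₂)‖
      ≤ ‖B A₁‖ * ‖((ad A₂).comp A₂ - (ad A₁).comp A₁) * B A₂‖ := norm_mul_le _ _
    _ ≤ ‖B A₁‖ * (‖(ad A₂).comp A₂ - (ad A₁).comp A₁‖ * ‖B A₂‖) :=
        mul_le_mul_of_nonneg_left (norm_mul_le _ _) (norm_nonneg _)
    _ ≤ 1 * (((‖A₁‖ + ‖A₂‖) * ‖A₁ - A₂‖) * 1) := by gcongr
    _ = (‖A₁‖ + ‖A₂‖) * ‖A₁ - A₂‖ := by ring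

lemma norm_P_le (A : Em m →L[ℝ] Em k) (hA : ‖A‖ ≤ 1) : ‖P A‖ ≤ ‖A‖ := by
  refine (opNorm_comp_le _ _).trans ?_
  refine le_trans (mul_le_mul_of_nonneg_left (opNorm_comp_le _ _) (norm_nonneg _)) ?_
  rw [norm_ad]
  nlinarith [norm_B_le A, norm_nonneg A, norm_nonneg (B A)]

lemma P_sub (A₁ A₂ : Em m →L[ℝ] Em k) :
    P A₁ - P A₂ = (B A₁ - B A₂).comp ((ad A₁).comp A₁)
      + (B A₂).comp ((ad A₁ - ad A₂).comp A₁ + (ad A₂).comp (A₁ - A₂)) := by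
  refine ContinuousLinearMap.ext fun x => ?_
  simp only [P, ContinuousLinearMap.sub_apply, ContinuousLinearMap.add_apply,
    ContinuousLinearMap.comp_apply, map_sub, map_add]
  abel

lemma norm_P_sub (A₁ A₂ : Em m →L[ℝ] Em k) (h₁ : ‖A₁‖ ≤ 1) (h₂ : ‖A₂‖ ≤ 1) :
    ‖P A₁ - P A₂‖ ≤ 3 * ((‖A₁‖ + ‖A₂‖) * ‖A₁ - A₂‖) := by
  have hd0 : (0 : ℝ) ≤ ‖A₁ - A₂‖ := norm_nonneg _
  have hX : ‖(ad A₁).comp A₁‖ ≤ 1 := by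
    refine (opNorm_comp_le _ _).trans ?_
    rw [norm_ad]
    nlinarith [norm_nonneg A₁]
  have t1 : ‖(B A₁ - B A₂).comp ((ad A₁).comp A₁)‖ ≤ (‖A₁‖ + ‖A₂‖) * ‖A₁ - A₂‖ := by
    refine (opNorm_comp_le _ _).trans ?_
    calc ‖B A₁ - B A₂‖ * ‖(ad A₁).comp A₁‖
        ≤ ((‖A₁‖ + ‖A₂‖) * ‖A₁ - A₂‖) * 1 :=
          mul_le_mul (norm_B_sub A₁ A₂) hX (norm_nonneg _) (by positivity)
      _ = (‖A₁‖ + ‖A₂‖) * ‖A₁ - A₂‖ := mul_one _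
  have t2a : ‖(ad A₁ - ad A₂).comp A₁‖ ≤ ‖A₁ - A₂‖ * ‖A₁‖ := by
    refine (opNorm_comp_le _ _).trans ?_
    rw [norm_ad_sub]
  have t2b : ‖(ad A₂).comp (A₁ - A₂)‖ ≤ ‖A₂‖ * ‖A₁ - A₂‖ := by
    refine (opNorm_comp_le _ _).trans ?_
    rw [norm_ad]
  have t2 : ‖(B A₂).comp ((ad A₁ - ad A₂).comp A₁ + (ad A₂).comp (A₁ - A₂))‖
      ≤ (‖A₁‖ + ‖A₂‖) * ‖A₁ - A₂‖ := by
    refine (opNorm_comp_le _ _).trans ?_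
    have hsum : ‖(ad A₁ - ad A₂).comp A₁ + (ad A₂).comp (A₁ - A₂)‖
        ≤ (‖A₁‖ + ‖A₂‖) * ‖A₁ - A₂‖ := by
      refine (norm_add_le _ _).trans ?_
      nlinarith
    nlinarith [norm_B_le A₂, norm_nonneg (B A₂),
      norm_nonneg ((ad A₁ - ad A₂).comp A₁ + (ad A₂).comp (A₁ - A₂)),
      mul_nonneg (add_nonneg (norm_nonneg A₁) (norm_nonneg A₂)) hd0]
  calc ‖P A₁ - P A₂‖ ≤ ‖(B A₁ - B A₂).comp ((ad A₁).comp A₁)‖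
        + ‖(B A₂).comp ((ad A₁ - ad A₂).comp A₁ + (ad A₂).comp (A₁ - A₂))‖ := by
        rw [P_sub]; exact norm_add_le _ _
    _ ≤ 3 * ((‖A₁‖ + ‖A₂‖) * ‖A₁ - A₂‖) := by
        nlinarith [mul_nonneg (add_nonneg (norm_nonneg A₁) (norm_nonneg A₂)) hd0]

lemma g₁_sub (A₁ A₂ : Em m →L[ℝ] Em k) (h₁ : ‖A₁‖ ≤ 1) (h₂ : ‖A₂‖ ≤ 1) :
    ‖g₁ A₁ - g₁ A₂‖ ≤ 7 * ((‖A₁‖ + ‖A₂‖) * ‖A₁ - A₂‖) := by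
  have hd0 : (0 : ℝ) ≤ ‖A₁ - A₂‖ := norm_nonneg _
  have hid : g₁ A₁ - g₁ A₂
      = -((P A₁ - P A₂).comp (S A₁) + (P A₂).comp (S A₁ - S A₂)) := by
    refine ContinuousLinearMap.ext fun x => ?_
    simp only [g₁, ContinuousLinearMap.sub_apply, ContinuousLinearMap.add_apply,
      ContinuousLinearMap.neg_apply, ContinuousLinearMap.comp_apply, map_sub]
    abel
  rw [hid, norm_neg]
  refine (norm_add_le _ _).trans ?_
  have t1 : ‖(P A₁ - P A₂).comp (S A₁)‖ ≤ 3 * ((‖A₁‖ + ‖A₂‖) * ‖A₁ - A₂‖) * 2 := by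
    refine (opNorm_comp_le _ _).trans ?_
    exact mul_le_mul (norm_P_sub A₁ A₂ h₁ h₂) (norm_S_le A₁ h₁) (norm_nonneg _) (by positivity)
  have t2 : ‖(P A₂).comp (S A₁ - S A₂)‖ ≤ ‖A₂‖ * ‖A₁ - A₂‖ := by
    refine (opNorm_comp_le _ _).trans ?_
    exact mul_le_mul (norm_P_le A₂ h₂) (norm_S_sub A₁ A₂) (norm_nonneg _) (norm_nonneg _)
  nlinarith [norm_nonneg A₁, norm_nonneg A₂,
    mul_nonneg (add_nonneg (norm_nonneg A₁) (norm_nonneg A₂)) hd0]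

lemma norm_R_le (A : Em m →L[ℝ] Em k) (hA : ‖A‖ ≤ 1) : ‖R A‖ ≤ 2 * ‖A‖ := by
  rw [R_eq]
  refine (norm_add_le _ _).trans ?_
  have t1 : ‖(-(P A)).comp (fst ℝ (Em m) (Em k))‖ ≤ ‖A‖ := by
    refine (opNorm_comp_le _ _).trans ?_
    rw [norm_neg]
    calc ‖P A‖ * ‖fst ℝ (Em m) (Em k)‖ ≤ ‖A‖ * 1 :=
          mul_le_mul (norm_P_le A hA) norm_fst_le' (norm_nonneg _) (norm_nonneg _)
      _ = ‖A‖ := mul_one _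
  have t2 : ‖((B A).comp (ad A)).comp (snd ℝ (Em m) (Em k))‖ ≤ ‖A‖ := by
    refine (opNorm_comp_le _ _).trans ?_
    have h : ‖(B A).comp (ad A)‖ ≤ ‖A‖ := by
      refine (opNorm_comp_le _ _).trans ?_
      rw [norm_ad]
      nlinarith [norm_B_le A, norm_nonneg A, norm_nonneg (B A)]
    calc ‖(B A).comp (ad A)‖ * ‖snd ℝ (Em m) (Em k)‖ ≤ ‖A‖ * 1 :=
          mul_le_mul h norm_snd_le' (norm_nonneg _) (norm_nonneg _)
      _ = ‖A‖ := mul_one _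
  linarith

lemma R_sub (A₁ A₂ : Em m →L[ℝ] Em k) :
    R A₁ - R A₂ = (B A₁ - B A₂).comp (S A₁) + (B A₂).comp (S A₁ - S A₂) := by
  refine ContinuousLinearMap.ext fun x => ?_
  simp only [R, ContinuousLinearMap.sub_apply, ContinuousLinearMap.add_apply,
    ContinuousLinearMap.comp_apply, map_sub]
  abel

lemma norm_R_sub (A₁ A₂ : Em m →L[ℝ] Em k) (h₁ : ‖A₁‖ ≤ 1) (h₂ : ‖A₂‖ ≤ 1) :
    ‖R A₁ - R A₂‖ ≤ 2 * ((‖A₁‖ + ‖A₂‖) * ‖A₁ - A₂‖) + ‖A₁ - A₂‖ := by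
  rw [R_sub]
  refine (norm_add_le _ _).trans ?_
  have t1 : ‖(B A₁ - B A₂).comp (S A₁)‖ ≤ (‖A₁‖ + ‖A₂‖) * ‖A₁ - A₂‖ * 2 := by
    refine (opNorm_comp_le _ _).trans ?_
    exact mul_le_mul (norm_B_sub A₁ A₂) (norm_S_le A₁ h₁) (norm_nonneg _) (by positivity)
  have t2 : ‖(B A₂).comp (S A₁ - S A₂)‖ ≤ ‖A₁ - A₂‖ := by
    refine (opNorm_comp_le _ _).trans ?_
    calc ‖B A₂‖ * ‖S A₁ - S A₂‖ ≤ 1 * ‖A₁ - A₂‖ :=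
          mul_le_mul (norm_B_le A₂) (norm_S_sub A₁ A₂) (norm_nonneg _) zero_le_one
      _ = ‖A₁ - A₂‖ := one_mul _
  linarith

lemma g₂_sub (A₁ A₂ : Em m →L[ℝ] Em k) (h₁ : ‖A₁‖ ≤ 1) (h₂ : ‖A₂‖ ≤ 1) :
    ‖g₂ A₁ - g₂ A₂‖ ≤ 7 * ((‖A₁‖ + ‖A₂‖) * ‖A₁ - A₂‖) := by
  have hd0 : (0 : ℝ) ≤ ‖A₁ - A₂‖ := norm_nonneg _
  have hid : g₂ A₁ - g₂ A₂ = (A₁ - A₂).comp (R A₁) + A₂.comp (R A₁ - R A₂) := by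
    refine ContinuousLinearMap.ext fun x => ?_
    simp only [g₂, ContinuousLinearMap.sub_apply, ContinuousLinearMap.add_apply,
      ContinuousLinearMap.comp_apply, map_sub]
    abel
  rw [hid]
  refine (norm_add_le _ _).trans ?_
  have t1 : ‖(A₁ - A₂).comp (R A₁)‖ ≤ ‖A₁ - A₂‖ * (2 * ‖A₁‖) := by
    refine (opNorm_comp_le _ _).trans ?_
    exact mul_le_mul_of_nonneg_left (norm_R_le A₁ h₁) (norm_nonneg _)
  have t2 : ‖A₂.comp (R A₁ - R A₂)‖
      ≤ ‖A₂‖ * (2 * ((‖A₁‖ + ‖A₂‖) * ‖A₁ - A₂‖) + ‖A₁ - A₂‖) := by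
    refine (opNorm_comp_le _ _).trans ?_
    exact mul_le_mul_of_nonneg_left (norm_R_sub A₁ A₂ h₁ h₂) (norm_nonneg _)
  nlinarith [norm_nonneg A₁, norm_nonneg A₂,
    mul_nonneg (add_nonneg (norm_nonneg A₁) (norm_nonneg A₂)) hd0]

lemma prod_sub {X Y Z : Type*} [NormedAddCommGroup X] [NormedAddCommGroup Y]
    [NormedAddCommGroup Z] [NormedSpace ℝ X] [NormedSpace ℝ Y] [NormedSpace ℝ Z]
    (f f' : X →L[ℝ] Y) (g g' : X →L[ℝ] Z) :
    f.prod g - f'.prod g' = (f - f').prod (g - g') := by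
  refine ContinuousLinearMap.ext fun x => ?_
  simp [Prod.mk_sub_mk]

lemma norm_prod_le {X Y Z : Type*} [NormedAddCommGroup X] [NormedAddCommGroup Y]
    [NormedAddCommGroup Z] [NormedSpace ℝ X] [NormedSpace ℝ Y] [NormedSpace ℝ Z]
    (f : X →L[ℝ] Y) (g : X →L[ℝ] Z) : ‖f.prod g‖ ≤ ‖f‖ + ‖g‖ := by
  refine opNorm_le_bound _ (by positivity) fun x => ?_
  have : ‖(f.prod g) x‖ = max ‖f x‖ ‖g x‖ := rfl
  rw [this]
  refine max_le ?_ ?_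
  · exact (f.le_opNorm x).trans (by nlinarith [norm_nonneg g, norm_nonneg x])
  · exact (g.le_opNorm x).trans (by nlinarith [norm_nonneg f, norm_nonneg x])

lemma fMap_sub_norm (A₁ A₂ : Em m →L[ℝ] Em k) (h₁ : ‖A₁‖ ≤ 1) (h₂ : ‖A₂‖ ≤ 1) :
    ‖fMap m k A₁ - fMap m k A₂‖
      ≤ ((‖esL m k‖ + 1) * (‖eL m k‖ + 1) * 14) * ((‖A₁‖ + ‖A₂‖) * ‖A₁ - A₂‖) := by
  have hd0 : (0 : ℝ) ≤ ‖A₁ - A₂‖ := norm_nonneg _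
  have hs0 : (0 : ℝ) ≤ ‖A₁‖ + ‖A₂‖ := add_nonneg (norm_nonneg _) (norm_nonneg _)
  have hid : fMap m k A₁ - fMap m k A₂
      = (esL m k).comp ((((g₁ A₁ - g₁ A₂).prod (g₂ A₁ - g₂ A₂))).comp (eL m k)) := by
    rw [fMap_eq, fMap_eq, ← ContinuousLinearMap.comp_sub, ← ContinuousLinearMap.sub_comp,
      prod_sub]
  rw [hid]
  have hD : ‖((g₁ A₁ - g₁ A₂).prod (g₂ A₁ - g₂ A₂))‖
      ≤ 14 * ((‖A₁‖ + ‖A₂‖) * ‖A₁ - A₂‖) := by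
    refine (norm_prod_le _ _).trans ?_
    have := g₁_sub A₁ A₂ h₁ h₂
    have := g₂_sub A₁ A₂ h₁ h₂
    linarith
  calc ‖(esL m k).comp ((((g₁ A₁ - g₁ A₂).prod (g₂ A₁ - g₂ A₂))).comp (eL m k))‖
      ≤ ‖esL m k‖ * (‖((g₁ A₁ - g₁ A₂).prod (g₂ A₁ - g₂ A₂))‖ * ‖eL m k‖) :=
        (opNorm_comp_le _ _).trans
          (mul_le_mul_of_nonneg_left (opNorm_comp_le _ _) (norm_nonneg _))
    _ ≤ ‖esL m k‖ * ((14 * ((‖A₁‖ + ‖A₂‖) * ‖A₁ - A₂‖)) * ‖eL m k‖) := by gcongr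
    _ ≤ (‖esL m k‖ + 1) * ((14 * ((‖A₁‖ + ‖A₂‖) * ‖A₁ - A₂‖)) * (‖eL m k‖ + 1)) := by
        gcongr <;> linarith
    _ = ((‖esL m k‖ + 1) * (‖eL m k‖ + 1) * 14) * ((‖A₁‖ + ‖A₂‖) * ‖A₁ - A₂‖) := by ring

end Stmt10

/-- Second-order expansion of the orthogonal projection onto the graph plane of `A`:
`F(A) = P(A) − L(A)` vanishes at `A = 0` and satisfies the quasi-quadratic Lipschitz estimate
`‖F(A₁) − F(A₂)‖ ≤ C(n,m)·(‖A₁‖ + ‖A₂‖)·‖A₁ − A₂‖` on the unit ball (operator norms); in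
particular `‖F(A)‖ ≤ C·‖A‖²` for `‖A‖ ≤ 1`. -/
theorem stmt_10 (n m : ℕ) (hm : 1 ≤ m) (hmn : m < n) :
    fMap m (n - m) 0 = 0 ∧
      ∃ C > (0 : ℝ),
        (∀ A₁ A₂ : Em m →L[ℝ] Em (n - m), ‖A₁‖ ≤ 1 → ‖A₂‖ ≤ 1 →
          ‖fMap m (n - m) A₁ - fMap m (n - m) A₂‖ ≤ C * (‖A₁‖ + ‖A₂‖) * ‖A₁ - A₂‖) ∧
        ∀ A : Em m →L[ℝ] Em (n - m), ‖A‖ ≤ 1 → ‖fMap m (n - m) A‖ ≤ C * ‖A‖ ^ 2 := by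
  set k := n - m
  refine ⟨Stmt10.fMap_zero, (‖Stmt10.esL m k‖ + 1) * (‖Stmt10.eL m k‖ + 1) * 14, ?_, ?_, ?_⟩
  · positivity
  · intro A₁ A₂ h₁ h₂
    have := Stmt10.fMap_sub_norm A₁ A₂ h₁ h₂
    linarith [this, mul_assoc ((‖Stmt10.esL m k‖ + 1) * (‖Stmt10.eL m k‖ + 1) * 14) (‖A₁‖ + ‖A₂‖) ‖A₁ - A₂‖]
  · intro A hA
    have h := Stmt10.fMap_sub_norm A 0 hA (by simp)
    rw [Stmt10.fMap_zero, sub_zero, sub_zero, norm_zero, add_zero] at h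
    calc ‖fMap m k A‖ ≤ ((‖Stmt10.esL m k‖ + 1) * (‖Stmt10.eL m k‖ + 1) * 14) * (‖A‖ * ‖A‖) := h
      _ = (‖Stmt10.esL m k‖ + 1) * (‖Stmt10.eL m k‖ + 1) * 14 * ‖A‖ ^ 2 := by ring
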